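/- Let (Ω, ℱ, P) be a probability space, let m = s²·n for positive integers s and n, and let x, y : Ω → ℝᵐ be square-integrable random vectors with E[x | σ(y)] = y almost surely and Var(xⱼ | σ(y)) ≤ 1 almost surely for every j. Let f : ℝᵐ → ℝᵐ be measurable with f∘x square-integrable. Let 𝒥 be a nonempty finite family of subsets of {1,…,m}, each of cardinality n = m/s², such that every index j ∈ {1,…,m} belongs to exactly |𝒥|/s² members of 𝒥. For each J ∈ 𝒥, let g^J : Ω → ℝᴶ be a square-integrable random vector with Cov(g^J_j, x_j | σ(y)) = 0 almost surely for every j ∈ J. Then E[⟨f(x) − y, x − y⟩] ≤ √(m·s²) · (1/|𝒥|) · Σ_{J∈𝒥} ( E[ Σ_{j∈J} (f(x)_j − g^J_j)² ] )^{1/2}. -/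

import Mathlib

open MeasureTheory Finset

/-- Conditional expectation `E[f | 𝒢]` under measure `μ` (ambient σ-algebra `mΩ`). -/
noncomputable def condExpect {Ω : Type*} {mΩ : MeasurableSpace Ω} (𝒢 : MeasurableSpace Ω)
    (μ : @Measure Ω mΩ) {E : Type*} [NormedAddCommGroup E] [NormedSpace ℝ E] [CompleteSpace E]
    (f : Ω → E) : Ω → E :=
  MeasureTheory.condExp (α := Ω) (E := E) (m₀ := mΩ) 𝒢 μ f

/-- Conditional covariance of two real random variables given a sub-σ-algebra `𝒢`:
`Cov(U, V | 𝒢) = E[U·V | 𝒢] − E[U | 𝒢]·E[V | 𝒢]`. -/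
noncomputable def condCov {Ω : Type*} {mΩ : MeasurableSpace Ω} (𝒢 : MeasurableSpace Ω)
    (μ : @Measure Ω mΩ) (U V : Ω → ℝ) : Ω → ℝ :=
  fun ω => condExpect 𝒢 μ (fun ω' => U ω' * V ω') ω
    - condExpect 𝒢 μ U ω * condExpect 𝒢 μ V ω

/-- Conditional variance: `Var(U | 𝒢) = Cov(U, U | 𝒢)`. -/
noncomputable def condVar {Ω : Type*} {mΩ : MeasurableSpace Ω} (𝒢 : MeasurableSpace Ω)
    (μ : @Measure Ω mΩ) (U : Ω → ℝ) : Ω → ℝ :=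
  condCov 𝒢 μ U U

/-!
Fix a coordinate `j` and write `E = E[xⱼ | σ(y)] = yⱼ`. Since `Cov(gᴶⱼ, xⱼ | σ(y)) = 0`, the
variable `gᴶⱼ` is orthogonal in `L²` to the residual `xⱼ − E`, and so is every `σ(y)`-measurable
variable, in particular `E` itself. Hence `E[(f(x)ⱼ − E)(xⱼ − E)] = E[(f(x)ⱼ − gᴶⱼ)(xⱼ − E)]`,
which Cauchy–Schwarz bounds by `‖f(x)ⱼ − gᴶⱼ‖₂`, because `‖xⱼ − E‖₂² = E[Var(xⱼ | σ(y))] ≤ 1`.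
Every coordinate lies in `|𝒥|/s²` of the subimages, so averaging these bounds over `𝒥` and
applying Cauchy–Schwarz to the `n` coordinates of each subimage gives the factor
`s²·√n = √(m·s²)`.
-/

section L2

variable {Ω : Type*} {mΩ : MeasurableSpace Ω} {P : Measure Ω}

lemma MeasureTheory.MemLp.euclideanSpace_apply {ι : Type*} [Fintype ι] {p : ENNReal}
    {x : Ω → EuclideanSpace ℝ ι} (hx : MemLp x p P) (j : ι) :
    MemLp (fun ω => x ω j) p P :=
  (EuclideanSpace.proj (𝕜 := ℝ) j).comp_memLp' hx

lemma MeasureTheory.MemLp.integrable_fun_mul {u v : Ω → ℝ} (hu : MemLp u 2 P)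
    (hv : MemLp v 2 P) : Integrable (fun ω => u ω * v ω) P :=
  hu.integrable_mul hv

lemma integral_mul_le_sqrt_mul_sqrt {u v : Ω → ℝ} (hu : MemLp u 2 P) (hv : MemLp v 2 P) :
    ∫ ω, u ω * v ω ∂P ≤ √(∫ ω, u ω ^ 2 ∂P) * √(∫ ω, v ω ^ 2 ∂P) := by
  have inner_toLp : ∀ {a b : Ω → ℝ} (ha : MemLp a 2 P) (hb : MemLp b 2 P),
      inner ℝ (ha.toLp a) (hb.toLp b) = ∫ ω, a ω * b ω ∂P := fun ha hb => by
    rw [L2.inner_def]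
    refine integral_congr_ae ?_
    filter_upwards [ha.coeFn_toLp, hb.coeFn_toLp] with ω h1 h2
    simp [h1, h2, mul_comm]
  have norm_toLp : ∀ {a : Ω → ℝ} (ha : MemLp a 2 P), ‖ha.toLp a‖ = √(∫ ω, a ω ^ 2 ∂P) :=
    fun ha => by simp_rw [norm_eq_sqrt_real_inner, inner_toLp ha ha, sq]
  rw [← inner_toLp hu hv, ← norm_toLp hu, ← norm_toLp hv]
  exact real_inner_le_norm _ _

end L2

lemma condExp_euclideanSpace_apply {Ω ι : Type*} {𝒢 mΩ : MeasurableSpace Ω} {P : @Measure Ω mΩ}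
    [Fintype ι] {x : Ω → EuclideanSpace ℝ ι} (hx : Integrable x P) (j : ι) :
    P[fun ω => x ω j|𝒢] =ᵐ[P] fun ω => P[x|𝒢] ω j :=
  ((EuclideanSpace.proj j).comp_condExp_comm hx).symm

section CondExp

variable {Ω : Type*} {𝒢 mΩ : MeasurableSpace Ω} {P : @Measure Ω mΩ} [IsFiniteMeasure P]
  {H X Z : Ω → ℝ}

lemma integral_mul_condExp (hle : 𝒢 ≤ mΩ) (hH : MemLp H 2 P) (hX : MemLp X 2 P) :
    ∫ ω, H ω * P[X|𝒢] ω ∂P = ∫ ω, P[H|𝒢] ω * P[X|𝒢] ω ∂P := by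
  have hpull : P[H * P[X|𝒢]|𝒢] =ᵐ[P] P[H|𝒢] * P[X|𝒢] :=
    condExp_mul_of_stronglyMeasurable_right stronglyMeasurable_condExp
      (hH.integrable_mul (hX.condExp one_le_two)) (hH.integrable one_le_two)
  rw [← integral_condExp hle]
  exact integral_congr_ae hpull

lemma integral_condCov (hle : 𝒢 ≤ mΩ) (hH : MemLp H 2 P) (hX : MemLp X 2 P) :
    ∫ ω, condCov 𝒢 P H X ω ∂P = ∫ ω, H ω * (X ω - P[X|𝒢] ω) ∂P := by
  have hX' := hX.condExp (m := 𝒢) one_le_two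
  simp only [condCov, condExpect, mul_sub]
  rw [integral_sub integrable_condExp ((hH.condExp one_le_two).integrable_fun_mul hX'),
    integral_sub (hH.integrable_fun_mul hX) (hH.integrable_fun_mul hX'), integral_condExp hle,
    integral_mul_condExp hle hH hX]

lemma integral_mul_sub_condExp_of_stronglyMeasurable (hle : 𝒢 ≤ mΩ)
    (hZm : StronglyMeasurable[𝒢] Z) (hZ : MemLp Z 2 P) (hX : MemLp X 2 P) :
    ∫ ω, Z ω * (X ω - P[X|𝒢] ω) ∂P = 0 := by
  have hZX := integral_mul_condExp hle hX hZ
  rw [condExp_of_stronglyMeasurable hle hZm (hZ.integrable one_le_two)] at hZX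
  simp only [mul_sub]
  rw [integral_sub (hZ.integrable_fun_mul hX) (hZ.integrable_fun_mul (hX.condExp one_le_two)),
    sub_eq_zero]
  simpa only [mul_comm] using hZX

lemma integral_sq_sub_condExp (hle : 𝒢 ≤ mΩ) (hX : MemLp X 2 P) :
    ∫ ω, (X ω - P[X|𝒢] ω) ^ 2 ∂P = ∫ ω, condVar 𝒢 P X ω ∂P := by
  have hX' := hX.condExp (m := 𝒢) one_le_two
  have hres : MemLp (fun ω => X ω - P[X|𝒢] ω) 2 P := hX.sub hX'
  have hsplit : ∀ ω, (X ω - P[X|𝒢] ω) ^ 2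
      = X ω * (X ω - P[X|𝒢] ω) - P[X|𝒢] ω * (X ω - P[X|𝒢] ω) := fun ω => by ring
  simp_rw [hsplit]
  rw [integral_sub (hX.integrable_fun_mul hres) (hX'.integrable_fun_mul hres),
    integral_mul_sub_condExp_of_stronglyMeasurable hle stronglyMeasurable_condExp hX' hX,
    sub_zero, condVar, integral_condCov hle hX hX]

end CondExp

section CondExpProb

variable {Ω : Type*} {𝒢 mΩ : MeasurableSpace Ω} {P : @Measure Ω mΩ} [IsProbabilityMeasure P]
  {F G X Y : Ω → ℝ}

lemma integral_mul_sub_le_of_condExp_eq (hle : 𝒢 ≤ mΩ) (hF : MemLp F 2 P) (hG : MemLp G 2 P)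
    (hX : MemLp X 2 P) (hY : P[X|𝒢] =ᵐ[P] Y) (hvar : ∀ᵐ ω ∂P, condVar 𝒢 P X ω ≤ 1)
    (hcov : ∀ᵐ ω ∂P, condCov 𝒢 P G X ω = 0) :
    ∫ ω, (F ω - Y ω) * (X ω - Y ω) ∂P ≤ √(∫ ω, (F ω - G ω) ^ 2 ∂P) := by
  have hE : ∫ ω, (F ω - Y ω) * (X ω - Y ω) ∂P
      = ∫ ω, (F ω - P[X|𝒢] ω) * (X ω - P[X|𝒢] ω) ∂P :=
    integral_congr_ae (hY.mono fun ω hω => by simp only [hω])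
  rw [hE]
  have hX' := hX.condExp (m := 𝒢) one_le_two
  have hres : MemLp (fun ω => X ω - P[X|𝒢] ω) 2 P := hX.sub hX'
  have hFG : MemLp (fun ω => F ω - G ω) 2 P := hF.sub hG
  have hG_orth : ∫ ω, G ω * (X ω - P[X|𝒢] ω) ∂P = 0 := by
    rw [← integral_condCov hle hG hX]
    exact integral_eq_zero_of_ae hcov
  have hres_sq : ∫ ω, (X ω - P[X|𝒢] ω) ^ 2 ∂P ≤ 1 := by
    have hvar_int : Integrable (condVar 𝒢 P X) P :=
      integrable_condExp.sub (hX'.integrable_fun_mul hX')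
    rw [integral_sq_sub_condExp hle hX]
    simpa using integral_mono_ae hvar_int (integrable_const 1) hvar
  have hsplit : ∀ ω, (F ω - P[X|𝒢] ω) * (X ω - P[X|𝒢] ω) = (F ω - G ω) * (X ω - P[X|𝒢] ω)
      + G ω * (X ω - P[X|𝒢] ω) - P[X|𝒢] ω * (X ω - P[X|𝒢] ω) := fun ω => by ring
  simp_rw [hsplit]
  rw [integral_sub ((hFG.integrable_fun_mul hres).fun_add (hG.integrable_fun_mul hres))
      (hX'.integrable_fun_mul hres), integral_add (hFG.integrable_fun_mul hres)
      (hG.integrable_fun_mul hres), hG_orth,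
    integral_mul_sub_condExp_of_stronglyMeasurable hle stronglyMeasurable_condExp hX' hX,
    add_zero, sub_zero]
  calc ∫ ω, (F ω - G ω) * (X ω - P[X|𝒢] ω) ∂P
      ≤ √(∫ ω, (F ω - G ω) ^ 2 ∂P) * √(∫ ω, (X ω - P[X|𝒢] ω) ^ 2 ∂P) :=
        integral_mul_le_sqrt_mul_sqrt hFG hres
    _ ≤ √(∫ ω, (F ω - G ω) ^ 2 ∂P) := by
        refine mul_le_of_le_one_right (Real.sqrt_nonneg _) ?_
        exact Real.sqrt_le_one.mpr hres_sq

end CondExpProb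

lemma integral_inner_eq_sum_integral {Ω ι : Type*} {mΩ : MeasurableSpace Ω} {P : Measure Ω}
    [Fintype ι] {u v : Ω → EuclideanSpace ℝ ι} (hu : MemLp u 2 P) (hv : MemLp v 2 P) :
    ∫ ω, inner ℝ (u ω) (v ω) ∂P = ∑ j, ∫ ω, u ω j * v ω j ∂P := by
  simp_rw [PiLp.inner_apply, RCLike.inner_apply, conj_trivial, mul_comm (v _ _)]
  exact integral_finsetSum _ fun j _ =>
    (hu.euclideanSpace_apply j).integrable_fun_mul (hv.euclideanSpace_apply j)

lemma card_mul_sum_le_of_uniform_cover {ι : Type*} [Fintype ι] [DecidableEq ι]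
    (𝒥 : Finset (Finset ι)) (k : ℕ) (hcount : ∀ j, k * #{J ∈ 𝒥 | j ∈ J} = #𝒥)
    {t : ι → ℝ} {b : Finset ι → ι → ℝ} (htb : ∀ J ∈ 𝒥, ∀ j ∈ J, t j ≤ b J j) :
    (#𝒥 : ℝ) * ∑ j, t j ≤ k * ∑ J ∈ 𝒥, ∑ j ∈ J, b J j := by
  calc (#𝒥 : ℝ) * ∑ j, t j = k * ∑ j, ∑ J ∈ 𝒥 with j ∈ J, t j := by
        simp_rw [mul_sum, sum_const, nsmul_eq_mul, ← mul_assoc]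
        refine sum_congr rfl fun j _ => ?_
        rw [← hcount j]
        push_cast
        ring
    _ ≤ k * ∑ j, ∑ J ∈ 𝒥 with j ∈ J, b J j := by
        gcongr with j _ J hJ
        exact htb J (mem_filter.mp hJ).1 j (mem_filter.mp hJ).2
    _ = k * ∑ J ∈ 𝒥, ∑ j ∈ J, b J j := by
        rw [sum_comm' (t' := 𝒥) (s' := id) fun j J => by simp [and_comm]]
        rfl

lemma sum_sqrt_integral_sq_le {Ω ι : Type*} {mΩ : MeasurableSpace Ω} {P : Measure Ω}
    [IsFiniteMeasure P] (J : Finset ι) {h : ι → Ω → ℝ} (hh : ∀ j ∈ J, MemLp (h j) 2 P) :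
    ∑ j ∈ J, √(∫ ω, h j ω ^ 2 ∂P) ≤ √(#J : ℝ) * √(∫ ω, ∑ j ∈ J, h j ω ^ 2 ∂P) := by
  rw [integral_finsetSum J fun j hj => (hh j hj).integrable_sq]
  simpa using Real.sum_sqrt_mul_sqrt_le J (fun _ => zero_le_one)
    fun j => integral_nonneg fun ω => sq_nonneg (h j ω)

open RealInnerProductSpace in
theorem cross_term_le_downsampled_invariance_general
    {Ω : Type*} [mΩ : MeasurableSpace Ω] (P : Measure Ω) [IsProbabilityMeasure P]
    (m s n : ℕ) (hm : m = s ^ 2 * n)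
    (x y : Ω → EuclideanSpace ℝ (Fin m))
    (hym : Measurable y)
    (hx : MemLp x 2 P) (hy : MemLp y 2 P)
    (hcond : condExpect (MeasurableSpace.comap y inferInstance) P x =ᵐ[P] y)
    (hvar : ∀ j : Fin m, ∀ᵐ ω ∂P,
      condVar (MeasurableSpace.comap y inferInstance) P (fun ω' => x ω' j) ω ≤ 1)
    (f : EuclideanSpace ℝ (Fin m) → EuclideanSpace ℝ (Fin m))
    (hfx : MemLp (fun ω => f (x ω)) 2 P)
    (𝒥 : Finset (Finset (Fin m))) (h𝒥 : 𝒥.Nonempty)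
    (hJcard : ∀ J ∈ 𝒥, J.card = n)
    (hJcount : ∀ j : Fin m, s ^ 2 * (𝒥.filter (fun J => j ∈ J)).card = 𝒥.card)
    (g : Finset (Fin m) → Fin m → Ω → ℝ)
    (hg : ∀ J ∈ 𝒥, ∀ j ∈ J, MemLp (g J j) 2 P)
    (hgcov : ∀ J ∈ 𝒥, ∀ j ∈ J, ∀ᵐ ω ∂P,
      condCov (MeasurableSpace.comap y inferInstance) P (g J j) (fun ω' => x ω' j) ω = 0) :
    ∫ ω, ⟪f (x ω) - y ω, x ω - y ω⟫ ∂P ≤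
      Real.sqrt ((m : ℝ) * s ^ 2) * ((1 / (𝒥.card : ℝ)) *
        ∑ J ∈ 𝒥, Real.sqrt (∫ ω, ∑ j ∈ J, (f (x ω) j - g J j ω) ^ 2 ∂P)) := by
  set 𝒢 := MeasurableSpace.comap y inferInstance
  have hle : 𝒢 ≤ mΩ := hym.comap_le
  have hcond_coord : ∀ j, P[fun ω => x ω j|𝒢] =ᵐ[P] fun ω => y ω j := fun j =>
    (condExp_euclideanSpace_apply (hx.integrable one_le_two) j).trans
      (hcond.mono fun ω hω => congrArg (· j) hω)
  have hcoord : ∀ J ∈ 𝒥, ∀ j ∈ J, ∫ ω, (f (x ω) j - y ω j) * (x ω j - y ω j) ∂P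
      ≤ √(∫ ω, (f (x ω) j - g J j ω) ^ 2 ∂P) := fun J hJ j hj =>
    integral_mul_sub_le_of_condExp_eq hle (hfx.euclideanSpace_apply j) (hg J hJ j hj)
      (hx.euclideanSpace_apply j) (hcond_coord j) (hvar j) (hgcov J hJ j hj)
  have hsubimage : ∀ J ∈ 𝒥, ∑ j ∈ J, √(∫ ω, (f (x ω) j - g J j ω) ^ 2 ∂P)
      ≤ √(n : ℝ) * √(∫ ω, ∑ j ∈ J, (f (x ω) j - g J j ω) ^ 2 ∂P) := fun J hJ =>
    hJcard J hJ ▸ sum_sqrt_integral_sq_le J (h := fun j ω => f (x ω) j - g J j ω)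
      fun j hj => (hfx.euclideanSpace_apply j).sub (hg J hJ j hj)
  have hcover := card_mul_sum_le_of_uniform_cover 𝒥 (s ^ 2) hJcount hcoord
  have hconst : √((m : ℝ) * s ^ 2) = (s : ℝ) ^ 2 * √(n : ℝ) := by
    rw [hm, show ((s ^ 2 * n : ℕ) : ℝ) * s ^ 2 = ((s : ℝ) ^ 2) ^ 2 * n by push_cast; ring,
      Real.sqrt_mul (by positivity), Real.sqrt_sq (by positivity)]
  have hcard : (0 : ℝ) < #𝒥 := by exact_mod_cast h𝒥.card_pos
  push_cast at hcover
  rw [integral_inner_eq_sum_integral (u := fun ω => f (x ω) - y ω) (v := fun ω => x ω - y ω)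
    (hfx.sub hy) (hx.sub hy), hconst]
  simp only [PiLp.sub_apply]
  calc _ ≤ (#𝒥 : ℝ)⁻¹ *
          ((s : ℝ) ^ 2 * ∑ J ∈ 𝒥, ∑ j ∈ J, √(∫ ω, (f (x ω) j - g J j ω) ^ 2 ∂P)) := by
        rwa [inv_mul_eq_div, le_div_iff₀' hcard]
    _ ≤ (#𝒥 : ℝ)⁻¹ * ((s : ℝ) ^ 2 *
          ∑ J ∈ 𝒥, √(n : ℝ) * √(∫ ω, ∑ j ∈ J, (f (x ω) j - g J j ω) ^ 2 ∂P)) := by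
        gcongr with J hJ
        exact hsubimage J hJ
    _ = _ := by rw [← mul_sum]; ring

open RealInnerProductSpace in
/-- **Key intermediate bound for Proposition 1.** The cross term between the denoising residual
`f(x) − y` and the noise `x − y` is controlled by the averaged downsampled invariance term:
`E[⟨f(x) − y, x − y⟩] ≤ √(m·s²) · (1/|𝒥|) · Σ_{J∈𝒥} (E[Σ_{j∈J} (f(x)ⱼ − gᴶⱼ)²])^{1/2}`. -/
theorem cross_term_le_downsampled_invariance
    {Ω : Type*} [mΩ : MeasurableSpace Ω] (P : Measure Ω) [IsProbabilityMeasure P]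
    (m s n : ℕ) (hs : 0 < s) (hn : 0 < n) (hm : m = s ^ 2 * n)
    (x y : Ω → EuclideanSpace ℝ (Fin m))
    (hxm : Measurable x) (hym : Measurable y)
    (hx : MemLp x 2 P) (hy : MemLp y 2 P)
    (hcond : condExpect (MeasurableSpace.comap y inferInstance) P x =ᵐ[P] y)
    (hvar : ∀ j : Fin m, ∀ᵐ ω ∂P,
      condVar (MeasurableSpace.comap y inferInstance) P (fun ω' => x ω' j) ω ≤ 1)
    (f : EuclideanSpace ℝ (Fin m) → EuclideanSpace ℝ (Fin m)) (hf : Measurable f)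
    (hfx : MemLp (fun ω => f (x ω)) 2 P)
    (𝒥 : Finset (Finset (Fin m))) (h𝒥 : 𝒥.Nonempty)
    (hJcard : ∀ J ∈ 𝒥, J.card = n)
    (hJcount : ∀ j : Fin m, s ^ 2 * (𝒥.filter (fun J => j ∈ J)).card = 𝒥.card)
    (g : Finset (Fin m) → Fin m → Ω → ℝ)
    (hg : ∀ J ∈ 𝒥, ∀ j ∈ J, MemLp (g J j) 2 P)
    (hgcov : ∀ J ∈ 𝒥, ∀ j ∈ J, ∀ᵐ ω ∂P,
      condCov (MeasurableSpace.comap y inferInstance) P (g J j) (fun ω' => x ω' j) ω = 0) :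
    ∫ ω, ⟪f (x ω) - y ω, x ω - y ω⟫ ∂P ≤
      Real.sqrt ((m : ℝ) * s ^ 2) * ((1 / (𝒥.card : ℝ)) *
        ∑ J ∈ 𝒥, Real.sqrt (∫ ω, ∑ j ∈ J, (f (x ω) j - g J j ω) ^ 2 ∂P)) :=
  cross_term_le_downsampled_invariance_general (mΩ := mΩ) P m s n hm x y hym hx hy hcond hvar f hfx
    𝒥 h𝒥 hJcard hJcount g hg hgcov
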